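/- If CPC proves φ(p,r) → ψ(p,s), then IPC proves ⋀ᵢ(pᵢ ∨ ¬pᵢ) → (¬φ(p,r) ∨ ¬¬ψ(p,s)). -/

import Mathlib

/-! ## Basic machinery: strings, polynomial time, NP, circuits, formulas -/

/-- The trivial finite encoding of binary strings over the alphabet `Bool`. -/
def listBoolEncoding : Computability.Encoding (List Bool) Bool where
  encode := id
  decode := fun l => some l
  decode_encode := fun _ => rfl

/-- A function on binary strings is polynomial-time computable if some
two-stack Turing machine computes it in polynomial time. -/
def PolyTimeComputable (f : List Bool → List Bool) : Prop :=
  Nonempty (Turing.TM2ComputableInPolyTime listBoolEncoding.encode listBoolEncoding.encode f)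

/-- An injective pairing of binary strings. -/
def pairEnc (u w : List Bool) : List Bool :=
  (u.map fun b => [true, b]).flatten ++ false :: w

/-- A predicate on binary strings is polynomial-time decidable. -/
def PolyTimeDecidable (P : List Bool → Prop) : Prop :=
  ∃ f, PolyTimeComputable f ∧ ∀ w, P w ↔ f w = [true]

/-- A binary predicate on binary strings is polynomial-time decidable. -/
def PolyTimeDecidable2 (P : List Bool → List Bool → Prop) : Prop :=
  ∃ f, PolyTimeComputable f ∧ ∀ u w, P u w ↔ f (pairEnc u w) = [true]

/-- `L ∈ NP`: there are a polynomial-time decidable binary predicate `R` and a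
polynomial `p` with `w ∈ L` iff some witness `u` with `|u| ≤ p (|w|)` satisfies `R u w`. -/
def InNP (L : Set (List Bool)) : Prop :=
  ∃ (R : List Bool → List Bool → Prop) (p : Polynomial ℕ),
    PolyTimeDecidable2 R ∧ ∀ w, w ∈ L ↔ ∃ u, u.length ≤ p.eval w.length ∧ R u w

/-- `L ∈ P`. -/
def InP (L : Set (List Bool)) : Prop := PolyTimeDecidable (· ∈ L)

/-- A gate of a Boolean circuit with `s` gates: a constant, an input gate reading
input variable `a : ℕ`, or a negation/conjunction/disjunction of earlier gates. -/
inductive CGate (s : ℕ) : Type where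
  | const : Bool → CGate s
  | input : ℕ → CGate s
  | not : Fin s → CGate s
  | and : Fin s → Fin s → CGate s
  | or : Fin s → Fin s → CGate s

/-- The gates referenced by a gate. -/
def CGate.deps {s : ℕ} : CGate s → List (Fin s)
  | .const _ => []
  | .input _ => []
  | .not j => [j]
  | .and j k => [j, k]
  | .or j k => [j, k]

/-- A Boolean circuit (as a DAG of gates, without a chosen output). -/
structure CircuitBase where
  size : ℕ
  gates : Fin size → CGate size
  wf : ∀ i : Fin size, ∀ j ∈ (gates i).deps, (j : ℕ) < (i : ℕ)

/-- Evaluate gate `i` of a circuit under an assignment `v` to the input variables. -/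
def CircuitBase.evalGate (c : CircuitBase) (v : ℕ → Bool) (i : Fin c.size) : Bool :=
  match h : c.gates i with
  | .const b => b
  | .input a => v a
  | .not j => !(c.evalGate v j)
  | .and j k => c.evalGate v j && c.evalGate v k
  | .or j k => c.evalGate v j || c.evalGate v k
termination_by (i : ℕ)
decreasing_by
  · exact c.wf i j (by rw [h]; simp [CGate.deps])
  · exact c.wf i j (by rw [h]; simp [CGate.deps])
  · exact c.wf i k (by rw [h]; simp [CGate.deps])
  · exact c.wf i j (by rw [h]; simp [CGate.deps])
  · exact c.wf i k (by rw [h]; simp [CGate.deps])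

/-- The circuit reads only input variables from `S`. -/
def CircuitBase.InputsIn (c : CircuitBase) (S : Set ℕ) : Prop :=
  ∀ (i : Fin c.size) (a : ℕ), c.gates i = CGate.input a → a ∈ S

/-- A monotone circuit: no negation gates. -/
def CircuitBase.MonotoneC (c : CircuitBase) : Prop :=
  ∀ (i j : Fin c.size), c.gates i ≠ CGate.not j

/-- A single-output Boolean circuit. -/
structure Circuit extends CircuitBase where
  out : Fin size

/-- Evaluate a circuit on an assignment to the input variables. -/
def Circuit.eval (c : Circuit) (v : ℕ → Bool) : Bool :=
  c.toCircuitBase.evalGate v c.out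

/-- A multi-output Boolean circuit. -/
structure MultiCircuit extends CircuitBase where
  outs : List (Fin size)

/-- Evaluate a multi-output circuit on an assignment to the input variables. -/
def MultiCircuit.eval (c : MultiCircuit) (v : ℕ → Bool) : List Bool :=
  c.outs.map (c.toCircuitBase.evalGate v)

/-- `pad_m(w) = 1w₁1w₂…1w_l 0…0` of total length `2m`. -/
def padBits (m : ℕ) (w : List Bool) : List Bool :=
  (w.map fun b => [true, b]).flatten ++ List.replicate (2 * m - 2 * w.length) false

/-- A function on binary strings is computable by polynomial-size circuits:
a family `Cₙ` of multi-output circuits of size polynomial in `n`, where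
`Cₙ` reads input bits `0,…,n-1` and outputs the padded value of `f` on
every input of length `n`. -/
def PolySizeComputable (f : List Bool → List Bool) : Prop :=
  ∃ (C : ℕ → MultiCircuit) (outLen : ℕ → ℕ) (p : Polynomial ℕ),
    ∀ n, (C n).size ≤ p.eval n ∧ (C n).toCircuitBase.InputsIn {a | a < n} ∧
      ∀ w : List Bool, w.length = n →
        (f w).length ≤ outLen n ∧
        (C n).eval (fun a => w.getD a false) = padBits (outLen n) (f w)

/-- `L ∈ P/poly`: a polynomial-size circuit family decides membership in `L`. -/
def InPPoly (L : Set (List Bool)) : Prop :=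
  ∃ (C : ℕ → Circuit) (p : Polynomial ℕ),
    ∀ n, (C n).size ≤ p.eval n ∧ (C n).toCircuitBase.InputsIn {a | a < n} ∧
      ∀ w : List Bool, w.length = n →
        (w ∈ L ↔ (C n).eval (fun a => w.getD a false) = true)

/-- A proof system for a language `L`: a polynomial-time decidable binary relation
`Pr` such that `w ∈ L` iff `w` has a `Pr`-proof. -/
def IsProofSystem (Pr : List Bool → List Bool → Prop) (L : Set (List Bool)) : Prop :=
  PolyTimeDecidable2 Pr ∧ ∀ w, w ∈ L ↔ ∃ u, Pr u w

/-- A proof system is polynomially bounded if every member of `L` has a proof of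
size polynomial in its length. -/
def PolyBounded (Pr : List Bool → List Bool → Prop) (L : Set (List Bool)) : Prop :=
  ∃ p : Polynomial ℕ, ∀ w ∈ L, ∃ u, Pr u w ∧ u.length ≤ p.eval w.length

/-- One-way protocols. -/
structure OneWayProtocol where
  /-- the polynomial-time decidable predicate of source data -/
  Pred : List Bool → Prop
  /-- the public transformation -/
  h : List Bool → List Bool
  /-- the derived secret information -/
  k : List Bool → List Bool
  /-- computes (in unary) the length of `k u` from `h u` -/
  lenFun : List Bool → List Bool
  /-- the bounding polynomial -/
  bnd : Polynomial ℕ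
  pred_dec : PolyTimeDecidable Pred
  h_poly : PolyTimeComputable h
  k_poly : PolyTimeComputable k
  lenFun_poly : PolyTimeComputable lenFun
  /-- semi-injectivity -/
  semi_inj : ∀ u₁ u₂, Pred u₁ → Pred u₂ → h u₁ = h u₂ → k u₁ = k u₂
  /-- `|k u|` is polynomial-time computable from `h u` -/
  len_eq : ∀ u, (k u).length = (lenFun (h u)).length
  /-- boundedness: `|u| ≤ bnd (|h u|)` -/
  bounded : ∀ u, u.length ≤ bnd.eval (h u).length
  /-- security against `P/poly` adversaries -/
  secure : ¬ ∃ f : List Bool → List Bool, PolySizeComputable f ∧ ∀ u, k u = f (h u)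

/-! ## Propositional formulas -/

/-- Propositional formulas over `{⊤, ⊥, ∧, ∨, →}` with variables indexed by `ℕ`. -/
inductive PropForm : Type where
  | tr : PropForm
  | fls : PropForm
  | var : ℕ → PropForm
  | and : PropForm → PropForm → PropForm
  | or : PropForm → PropForm → PropForm
  | imp : PropForm → PropForm → PropForm
deriving DecidableEq

/-- Negation abbreviates `φ → ⊥`. -/
def PropForm.neg (φ : PropForm) : PropForm := φ.imp .fls

/-- Classical Boolean evaluation of a formula. -/
def PropForm.eval (v : ℕ → Bool) : PropForm → Bool
  | .tr => true
  | .fls => false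
  | .var a => v a
  | .and φ ψ => φ.eval v && ψ.eval v
  | .or φ ψ => φ.eval v || ψ.eval v
  | .imp φ ψ => !(φ.eval v) || ψ.eval v

/-- A classical tautology. -/
def PropForm.Taut (φ : PropForm) : Prop := ∀ v, φ.eval v = true

/-- The variables occurring in a formula. -/
def PropForm.vars : PropForm → Finset ℕ
  | .tr => ∅
  | .fls => ∅
  | .var a => {a}
  | .and φ ψ => φ.vars ∪ ψ.vars
  | .or φ ψ => φ.vars ∪ ψ.vars
  | .imp φ ψ => φ.vars ∪ ψ.vars

/-- The size of a formula. -/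
def PropForm.size : PropForm → ℕ
  | .tr => 1
  | .fls => 1
  | .var _ => 1
  | .and φ ψ => φ.size + ψ.size + 1
  | .or φ ψ => φ.size + ψ.size + 1
  | .imp φ ψ => φ.size + ψ.size + 1

/-- Substitution of formulas for variables. -/
def PropForm.subst (σ : ℕ → PropForm) : PropForm → PropForm
  | .tr => .tr
  | .fls => .fls
  | .var a => σ a
  | .and φ ψ => .and (φ.subst σ) (ψ.subst σ)
  | .or φ ψ => .or (φ.subst σ) (ψ.subst σ)
  | .imp φ ψ => .imp (φ.subst σ) (ψ.subst σ)

/-- A monotone formula: built from atoms, `⊤`, `⊥`, `∧`, `∨` only (no implication). -/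
def PropForm.IsMonotone : PropForm → Prop
  | .tr => True
  | .fls => True
  | .var _ => True
  | .and φ ψ => φ.IsMonotone ∧ ψ.IsMonotone
  | .or φ ψ => φ.IsMonotone ∧ ψ.IsMonotone
  | .imp _ _ => False

/-- `MonoIn P b φ` holds if every occurrence in `φ` of a variable from `P` has
polarity allowed by `b` (`b = true`: positive occurrences only are constrained;
a variable of `P` may occur with polarity `b` but not opposite).
`MonoIn P true φ` says `φ` is monotone in the variables of `P`
(no negated occurrence of a `P`-variable in negation normal form). -/
def MonoIn (P : Finset ℕ) : Bool → PropForm → Prop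
  | _, .tr => True
  | _, .fls => True
  | b, .var a => b = true ∨ a ∉ P
  | b, .and φ ψ => MonoIn P b φ ∧ MonoIn P b ψ
  | b, .or φ ψ => MonoIn P b φ ∧ MonoIn P b ψ
  | b, .imp φ ψ => MonoIn P (!b) φ ∧ MonoIn P b ψ

/-- Conjunction of a list of formulas. -/
def conjList (Γ : List PropForm) : PropForm := Γ.foldr PropForm.and .tr

/-- Disjunction of a list of formulas. -/
def disjList (Δ : List PropForm) : PropForm := Δ.foldr PropForm.or .fls

/-- `⋀_{i<m} (pᵢ ∨ ¬pᵢ)`. -/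
def excludedMiddleConj (m : ℕ) : PropForm :=
  conjList ((List.range m).map fun i => (PropForm.var i).or (PropForm.var i).neg)

/-- Hilbert-style provability in intuitionistic propositional logic `IPC`. -/
inductive IPC : PropForm → Prop
  | mp {φ ψ : PropForm} : IPC (φ.imp ψ) → IPC φ → IPC ψ
  | ax1 (φ ψ : PropForm) : IPC (φ.imp (ψ.imp φ))
  | ax2 (φ ψ χ : PropForm) : IPC ((φ.imp (ψ.imp χ)).imp ((φ.imp ψ).imp (φ.imp χ)))
  | axAndI (φ ψ : PropForm) : IPC (φ.imp (ψ.imp (φ.and ψ)))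
  | axAndL (φ ψ : PropForm) : IPC ((φ.and ψ).imp φ)
  | axAndR (φ ψ : PropForm) : IPC ((φ.and ψ).imp ψ)
  | axOrL (φ ψ : PropForm) : IPC (φ.imp (φ.or ψ))
  | axOrR (φ ψ : PropForm) : IPC (ψ.imp (φ.or ψ))
  | axOrE (φ ψ χ : PropForm) : IPC ((φ.imp χ).imp ((ψ.imp χ).imp ((φ.or ψ).imp χ)))
  | axFls (φ : PropForm) : IPC (PropForm.fls.imp φ)
  | axTr : IPC .tr

/-- Unary encoding of a natural number as a binary string. -/
def natBits (n : ℕ) : List Bool := List.replicate n true ++ [false]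

/-- An encoding of propositional formulas as binary strings. -/
def PropForm.encode : PropForm → List Bool
  | .tr => [false, false, false]
  | .fls => [false, false, true]
  | .var a => [false, true] ++ natBits a
  | .and φ ψ => [true, false, false] ++ φ.encode ++ ψ.encode
  | .or φ ψ => [true, false, true] ++ φ.encode ++ ψ.encode
  | .imp φ ψ => [true, true] ++ φ.encode ++ ψ.encode

/-- The language of (codes of) classical propositional tautologies. -/
def CPClang : Set (List Bool) := {w | ∃ φ : PropForm, φ.Taut ∧ w = φ.encode}

/-- The formula computed by a circuit (unfolding the DAG into a tree). -/
def CircuitBase.gateForm (c : CircuitBase) (i : Fin c.size) : PropForm :=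
  match h : c.gates i with
  | .const b => if b then .tr else .fls
  | .input a => .var a
  | .not j => (c.gateForm j).neg
  | .and j k => (c.gateForm j).and (c.gateForm k)
  | .or j k => (c.gateForm j).or (c.gateForm k)
termination_by (i : ℕ)
decreasing_by
  · exact c.wf i j (by rw [h]; simp [CGate.deps])
  · exact c.wf i j (by rw [h]; simp [CGate.deps])
  · exact c.wf i k (by rw [h]; simp [CGate.deps])
  · exact c.wf i j (by rw [h]; simp [CGate.deps])
  · exact c.wf i k (by rw [h]; simp [CGate.deps])

/-- The formula `[C]` of a single-output circuit `C`. -/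
def Circuit.toForm (c : Circuit) : PropForm := c.toCircuitBase.gateForm c.out

/-- `[C]` is a Craig interpolant for `φ → ψ`: `C` reads only the shared
variables, and for every assignment `v`, `φ(v) = 1` implies `C(v) = 1`, and
`C(v) = 1` implies `ψ(v) = 1`. -/
def Interpolates (C : Circuit) (φ ψ : PropForm) : Prop :=
  C.toCircuitBase.InputsIn {a | a ∈ φ.vars ∩ ψ.vars} ∧
  ∀ v : ℕ → Bool, (φ.eval v = true → C.eval v = true) ∧ (C.eval v = true → ψ.eval v = true)

/-- Feasible interpolation of a proof system for `CPC`: from any proof of an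
implication one obtains an interpolating circuit of polynomial size. -/
def FeasibleInterpolation (Pr : List Bool → List Bool → Prop) : Prop :=
  ∃ s : Polynomial ℕ, ∀ (φ ψ : PropForm) (u : List Bool),
    Pr u (φ.imp ψ).encode →
    ∃ C : Circuit,
      C.size ≤ s.eval (u.length + (φ.imp ψ).encode.length) ∧ Interpolates C φ ψ

/-! ## Horn formulas -/

/-- A conjunction of atoms. -/
inductive AtomConj : PropForm → Prop
  | var (a : ℕ) : AtomConj (.var a)
  | and {φ ψ : PropForm} : AtomConj φ → AtomConj ψ → AtomConj (φ.and ψ)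

/-- An implicational Horn formula: an atom, or `(p₁ ∧ … ∧ p_k) → r` with all
`pᵢ` and `r` atoms. -/
inductive IsHorn : PropForm → Prop
  | atom (a : ℕ) : IsHorn (.var a)
  | imp {φ : PropForm} (r : ℕ) : AtomConj φ → IsHorn (φ.imp (.var r))

/-! ## Modal formulas -/

/-- Modal propositional formulas. -/
inductive ModalForm : Type where
  | tr : ModalForm
  | fls : ModalForm
  | var : ℕ → ModalForm
  | and : ModalForm → ModalForm → ModalForm
  | or : ModalForm → ModalForm → ModalForm
  | imp : ModalForm → ModalForm → ModalForm
  | box : ModalForm → ModalForm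
deriving DecidableEq

/-- Modal negation. -/
def ModalForm.neg (φ : ModalForm) : ModalForm := φ.imp .fls

/-- Substitution for modal formulas. -/
def ModalForm.subst (σ : ℕ → ModalForm) : ModalForm → ModalForm
  | .tr => .tr
  | .fls => .fls
  | .var a => σ a
  | .and φ ψ => .and (φ.subst σ) (ψ.subst σ)
  | .or φ ψ => .or (φ.subst σ) (ψ.subst σ)
  | .imp φ ψ => .imp (φ.subst σ) (ψ.subst σ)
  | .box φ => .box (φ.subst σ)

/-- The forgetful translation (`□φ ↦ φ`). -/
def ModalForm.forget : ModalForm → PropForm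
  | .tr => .tr
  | .fls => .fls
  | .var a => .var a
  | .and φ ψ => .and φ.forget ψ.forget
  | .or φ ψ => .or φ.forget ψ.forget
  | .imp φ ψ => .imp φ.forget ψ.forget
  | .box φ => φ.forget

/-- The collapse translation (`□φ ↦ ⊤`). -/
def ModalForm.collapse : ModalForm → PropForm
  | .tr => .tr
  | .fls => .fls
  | .var a => .var a
  | .and φ ψ => .and φ.collapse ψ.collapse
  | .or φ ψ => .or φ.collapse ψ.collapse
  | .imp φ ψ => .imp φ.collapse ψ.collapse
  | .box _ => .tr

/-- Hilbert-style provability in the normal modal logic `K` extended by the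
axioms in `Ax` (closed under substitution): a classical propositional base,
the distribution axiom, modus ponens, necessitation and substitution. -/
inductive KExt (Ax : Set ModalForm) : ModalForm → Prop
  | axiom' {φ : ModalForm} : φ ∈ Ax → KExt Ax φ
  | mp {φ ψ : ModalForm} : KExt Ax (φ.imp ψ) → KExt Ax φ → KExt Ax ψ
  | nec {φ : ModalForm} : KExt Ax φ → KExt Ax φ.box
  | subst {φ : ModalForm} (σ : ℕ → ModalForm) : KExt Ax φ → KExt Ax (φ.subst σ)
  | ax1 (φ ψ : ModalForm) : KExt Ax (φ.imp (ψ.imp φ))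
  | ax2 (φ ψ χ : ModalForm) : KExt Ax ((φ.imp (ψ.imp χ)).imp ((φ.imp ψ).imp (φ.imp χ)))
  | axAndI (φ ψ : ModalForm) : KExt Ax (φ.imp (ψ.imp (φ.and ψ)))
  | axAndL (φ ψ : ModalForm) : KExt Ax ((φ.and ψ).imp φ)
  | axAndR (φ ψ : ModalForm) : KExt Ax ((φ.and ψ).imp ψ)
  | axOrL (φ ψ : ModalForm) : KExt Ax (φ.imp (φ.or ψ))
  | axOrR (φ ψ : ModalForm) : KExt Ax (ψ.imp (φ.or ψ))
  | axOrE (φ ψ χ : ModalForm) : KExt Ax ((φ.imp χ).imp ((ψ.imp χ).imp ((φ.or ψ).imp χ)))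
  | axFls (φ : ModalForm) : KExt Ax (ModalForm.fls.imp φ)
  | axTr : KExt Ax .tr
  | axDNE (φ : ModalForm) : KExt Ax (φ.neg.neg.imp φ)
  | axK (φ ψ : ModalForm) : KExt Ax (((φ.imp ψ).box).imp (φ.box.imp ψ.box))

/-- Provability in the basic modal logic `K`. -/
def KProof : ModalForm → Prop := KExt ∅

/-! ## Automatability -/

/-- A proof system for `CPC` is substitutable: substituting constants for some
of the variables transforms proofs with polynomial overhead. -/
def Substitutable (Pr : List Bool → List Bool → Prop) : Prop :=
  ∃ l : Polynomial ℕ, ∀ (φ : PropForm) (σ : ℕ → PropForm) (u : List Bool),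
    (∀ a, σ a = .var a ∨ σ a = .tr ∨ σ a = .fls) →
    Pr u φ.encode →
    ∃ u', Pr u' (φ.subst σ).encode ∧ u'.length ≤ l.eval (u.length + φ.encode.length)

/-- Closure under variable-free modus ponens: from a proof of `φ → ψ` with `φ` a
variable-free tautology one obtains a proof of `ψ` with polynomial overhead. -/
def ClosedUnderVarFreeMP (Pr : List Bool → List Bool → Prop) : Prop :=
  ∃ m : Polynomial ℕ, ∀ (φ ψ : PropForm) (u : List Bool),
    φ.vars = ∅ → φ.Taut → Pr u (φ.imp ψ).encode →
    ∃ u', Pr u' ψ.encode ∧ u'.length ≤ m.eval (u.length + (φ.imp ψ).encode.length)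

/-- Automatability (padded formulation): a polynomial-time algorithm which, given a
formula `φ` together with (in unary) any bound `b` on the size of some `Pr`-proof of
`φ`, outputs a `Pr`-proof of `φ`; its running time is thus polynomial in `|φ|` and
the size of the shortest proof of `φ`. -/
def Automatable (Pr : List Bool → List Bool → Prop) : Prop :=
  ∃ A : List Bool → List Bool, PolyTimeComputable A ∧
    ∀ (φ : PropForm) (b : ℕ),
      (∃ u, Pr u φ.encode ∧ u.length ≤ b) →
      Pr (A (pairEnc φ.encode (List.replicate b true))) φ.encode

/-! ## Frege systems -/

/-- An inference rule: finitely many premises and a conclusion. -/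
structure FregeRule : Type where
  prems : List PropForm
  concl : PropForm

/-- `π` is a derivation from assumptions `Γ` in the inference system `F`: every
line is an assumption or follows from earlier lines by a substitution instance
of a rule of `F`. -/
def IsDerivation (F : List FregeRule) (Γ : List PropForm) (π : List PropForm) : Prop :=
  ∀ (i : ℕ) (hi : i < π.length),
    π.get ⟨i, hi⟩ ∈ Γ ∨
    ∃ R ∈ F, ∃ σ : ℕ → PropForm,
      π.get ⟨i, hi⟩ = R.concl.subst σ ∧
      ∀ p ∈ R.prems, ∃ (j : ℕ) (hj : j < π.length), j < i ∧ π.get ⟨j, hj⟩ = p.subst σ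

/-- `φ` is derivable from `Γ` in the inference system `F`. -/
def FregeProves (F : List FregeRule) (Γ : List PropForm) (φ : PropForm) : Prop :=
  ∃ π : List PropForm, IsDerivation F Γ π ∧ φ ∈ π

/-- The size of a derivation: the total size of its formulas. -/
def derivSize (π : List PropForm) : ℕ := (π.map PropForm.size).sum

/-! ## Graphs encoded as binary strings -/

/-- Adjacency in the graph on `n` vertices encoded by a binary string of length
`n(n-1)/2` (the entry for the pair `{i, j}` with `i < j` is at position
`j(j-1)/2 + i`). -/
def adjOf (w : List Bool) (i j : ℕ) : Bool :=
  if i < j then w.getD (j * (j - 1) / 2 + i) false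
  else if j < i then w.getD (i * (i - 1) / 2 + j) false
  else false

/-- The graph encoded by `w` (on `n` vertices) contains a `k`-clique. -/
def HasClique (w : List Bool) (n k : ℕ) : Prop :=
  ∃ f : Fin k → Fin n, Function.Injective f ∧
    ∀ a b : Fin k, a ≠ b → adjOf w (f a) (f b) = true

/-- The graph encoded by `w` (on `n` vertices) has a proper `l`-coloring. -/
def HasColoring (w : List Bool) (n l : ℕ) : Prop :=
  ∃ c : Fin n → Fin l, ∀ i j : Fin n, adjOf w (i : ℕ) (j : ℕ) = true → c i ≠ c j

/-- The language of graphs (on `n ≥ n₀` vertices) containing a `K(n)`-clique. -/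
def CliqueLang (n₀ : ℕ) (K : ℕ → ℕ) : Set (List Bool) :=
  {w | ∃ n, n₀ ≤ n ∧ w.length = n * (n - 1) / 2 ∧ HasClique w n (K n)}

/-- The language of graphs (on `n ≥ n₀` vertices) that are `L(n)`-colorable. -/
def ColorLang (n₀ : ℕ) (L : ℕ → ℕ) : Set (List Bool) :=
  {w | ∃ n, n₀ ≤ n ∧ w.length = n * (n - 1) / 2 ∧ HasColoring w n (L n)}

/-! ## Substitutions used for the intuitionistic translations -/

/-- The substitution replacing `pᵢ` (`i < m`) by `¬pᵢ`. -/
def negSubst (m : ℕ) : ℕ → PropForm :=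
  fun a => if a < m then (PropForm.var a).neg else PropForm.var a

/-- The substitution replacing `pᵢ` (`i < m`) by the fresh variable `q_i := p_{m+i}`. -/
def shiftSubst (m : ℕ) : ℕ → PropForm :=
  fun a => if a < m then PropForm.var (m + a) else PropForm.var a

/-- `⋀_{i<m} (pᵢ ∨ qᵢ)` where `qᵢ := p_{m+i}`. -/
def pairDisjConj (m : ℕ) : PropForm :=
  conjList ((List.range m).map fun i => (PropForm.var i).or (PropForm.var (m + i)))

/-!
For an assignment `v` to the shared variables `p` let `Lᵥ` be the list of literals it makes
true. If `φ` is satisfiable together with `Lᵥ`, then, as `φ` and `ψ` share only variables of `p`,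
every assignment satisfying `Lᵥ` satisfies `ψ`; otherwise every such assignment falsifies `φ`.
Glivenko's theorem, relativised to the context `Lᵥ`, turns this into `Lᵥ ⊢ ¬¬ψ`, resp.
`Lᵥ ⊢ ¬¬¬φ`, i.e. `Lᵥ ⊢ ¬φ`, in IPC. The hypotheses `pᵢ ∨ ¬pᵢ` then allow an intuitionistic case
split over all `v`. Glivenko's theorem itself follows from Kalmár's lemma by the same case split,
which needs no excluded middle when the goal is a double negation.
-/

namespace PropForm

/-- `impChain [γ₁, …, γₙ] φ = γₙ → ⋯ → γ₁ → φ`. -/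
def impChain : List PropForm → PropForm → PropForm
  | [], φ => φ
  | γ :: Γ, φ => impChain Γ (γ.imp φ)

theorem eval_impChain (Γ : List PropForm) (χ : PropForm) (v : ℕ → Bool) :
    (impChain Γ χ).eval v = true ↔ ((∀ γ ∈ Γ, γ.eval v = true) → χ.eval v = true) := by
  induction Γ generalizing χ with
  | nil => simp [impChain]
  | cons γ Γ ih =>
    rw [impChain, ih]
    cases h : γ.eval v <;> simp [eval, h]

theorem eval_congr {v w : ℕ → Bool} (χ : PropForm) (h : ∀ a ∈ χ.vars, v a = w a) :
    χ.eval v = χ.eval w := by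
  induction χ with
  | tr | fls => rfl
  | var a => exact h a (by simp [vars])
  | and φ ψ ihφ ihψ | or φ ψ ihφ ihψ | imp φ ψ ihφ ihψ =>
    simp only [vars, Finset.mem_union] at h
    simp only [eval, ihφ fun a ha => h a (Or.inl ha), ihψ fun a ha => h a (Or.inr ha)]

theorem Taut.eval_right {φ ψ : PropForm} (htaut : (φ.imp ψ).Taut) {u w : ℕ → Bool}
    (hφ : φ.eval u = true) (hagree : ∀ a ∈ φ.vars ∩ ψ.vars, w a = u a) : ψ.eval w = true := by
  classical
  let z : ℕ → Bool := fun a => if a ∈ φ.vars then u a else w a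
  have hφz : φ.eval z = true := by
    rw [eval_congr φ (w := u) fun a ha => if_pos ha, hφ]
  have hψz : ψ.eval z = ψ.eval w := by
    refine eval_congr ψ fun a ha => ?_
    by_cases haφ : a ∈ φ.vars
    · simp only [z, if_pos haφ, hagree a (Finset.mem_inter.mpr ⟨haφ, ha⟩)]
    · simp only [z, if_neg haφ]
  have := htaut z
  simp only [eval, hφz, Bool.not_true, Bool.false_or] at this
  rwa [← hψz]

def litOf (v : ℕ → Bool) (a : ℕ) : PropForm :=
  if v a then var a else (var a).neg

theorem eval_litOf (v w : ℕ → Bool) (a : ℕ) : (litOf v a).eval w = true ↔ w a = v a := by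
  cases h : v a <;> simp [litOf, h, neg, eval]

theorem forall_eval_litOf (v w : ℕ → Bool) (l : List ℕ) :
    (∀ γ ∈ l.map (litOf v), γ.eval w = true) ↔ ∀ a ∈ l, w a = v a := by
  simp [eval_litOf]

end PropForm

namespace IPC

open PropForm

theorem imp_self (φ : PropForm) : IPC (φ.imp φ) :=
  mp (mp (ax2 φ (φ.imp φ) φ) (ax1 φ (φ.imp φ))) (ax1 φ φ)

def Derives (Γ : List PropForm) (φ : PropForm) : Prop := IPC (impChain Γ φ)

namespace Derives

variable {Γ Δ : List PropForm} {φ ψ γ : PropForm}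

/-- The deduction theorem holds by definition of `impChain`. -/
theorem intro (h : Derives (γ :: Γ) φ) : Derives Γ (γ.imp φ) := h

theorem of_IPC (Γ : List PropForm) (h : IPC φ) : Derives Γ φ := by
  induction Γ generalizing φ with
  | nil => exact h
  | cons γ Γ ih => exact ih (mp (ax1 _ _) h)

theorem mp (h₁ : Derives Γ (φ.imp ψ)) (h₂ : Derives Γ φ) : Derives Γ ψ := by
  induction Γ generalizing φ ψ with
  | nil => exact IPC.mp h₁ h₂
  | cons γ Γ ih => exact ih (ih (of_IPC Γ (ax2 γ φ ψ)) h₁) h₂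

theorem weaken (γ : PropForm) (h : Derives Γ φ) : Derives (γ :: Γ) φ :=
  show Derives Γ (γ.imp φ) from mp (of_IPC Γ (ax1 φ γ)) h

theorem hyp (γ : PropForm) (h : γ ∈ Γ := by simp) : Derives Γ γ := by
  induction Γ with
  | nil => cases h
  | cons x Γ ih =>
    rcases List.mem_cons.mp h with rfl | h
    · exact of_IPC Γ (imp_self γ)
    · exact weaken x (ih h)

theorem cut (h : Derives Γ φ) (hΓ : ∀ γ ∈ Γ, Derives Δ γ) : Derives Δ φ := by
  induction Γ generalizing φ with
  | nil => exact of_IPC Δ h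
  | cons γ Γ ih =>
    exact mp (ih h fun x hx => hΓ x (List.mem_cons_of_mem _ hx)) (hΓ γ List.mem_cons_self)

theorem mono (hs : Γ ⊆ Δ) (h : Derives Γ φ) : Derives Δ φ :=
  cut h fun _ hx => hyp _ (hs hx)

theorem and_intro (hφ : Derives Γ φ) (hψ : Derives Γ ψ) : Derives Γ (φ.and ψ) :=
  mp (mp (of_IPC Γ (axAndI φ ψ)) hφ) hψ

theorem neg_and_of_neg_left (h : Derives Γ φ.neg) : Derives Γ (φ.and ψ).neg :=
  intro (mp (weaken _ h) (mp (of_IPC _ (axAndL φ ψ)) (hyp (φ.and ψ))))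

theorem neg_and_of_neg_right (h : Derives Γ ψ.neg) : Derives Γ (φ.and ψ).neg :=
  intro (mp (weaken _ h) (mp (of_IPC _ (axAndR φ ψ)) (hyp (φ.and ψ))))

theorem or_inl (h : Derives Γ φ) : Derives Γ (φ.or ψ) :=
  mp (of_IPC Γ (axOrL φ ψ)) h

theorem or_inr (h : Derives Γ ψ) : Derives Γ (φ.or ψ) :=
  mp (of_IPC Γ (axOrR φ ψ)) h

theorem neg_or (hφ : Derives Γ φ.neg) (hψ : Derives Γ ψ.neg) : Derives Γ (φ.or ψ).neg :=
  mp (mp (of_IPC Γ (axOrE φ ψ .fls)) hφ) hψ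

theorem imp_of_neg (h : Derives Γ φ.neg) : Derives Γ (φ.imp ψ) :=
  intro (mp (of_IPC _ (axFls ψ)) (mp (weaken _ h) (hyp φ)))

theorem imp_of_right (h : Derives Γ ψ) : Derives Γ (φ.imp ψ) :=
  mp (of_IPC Γ (ax1 ψ φ)) h

theorem neg_imp (hφ : Derives Γ φ) (hψ : Derives Γ ψ.neg) : Derives Γ (φ.imp ψ).neg :=
  intro (mp (weaken _ hψ) (mp (hyp (φ.imp ψ)) (weaken _ hφ)))

theorem cases_of_or_neg_mem (h : φ.or φ.neg ∈ Γ) :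
    Derives Γ ((φ.imp ψ).imp ((φ.neg.imp ψ).imp ψ)) :=
  intro <| intro <| mp (mp (mp (of_IPC _ (axOrE φ φ.neg ψ)) (hyp (φ.imp ψ)))
    (hyp (φ.neg.imp ψ))) (hyp _ (by simp [h]))

end Derives

theorem neg_neg_neg_imp_neg (α : PropForm) : IPC (α.neg.neg.neg.imp α.neg) :=
  show Derives [α, α.neg.neg.neg] .fls from
    Derives.mp (Derives.hyp α.neg.neg.neg)
      (Derives.intro (Derives.mp (Derives.hyp α.neg) (Derives.hyp α)))

theorem neg_neg_imp_imp_neg_neg (γ χ : PropForm) :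
    IPC ((γ.imp χ).neg.neg.imp (γ.imp χ.neg.neg)) :=
  show Derives [χ.neg, γ, (γ.imp χ).neg.neg] .fls from
    Derives.mp (Derives.hyp (γ.imp χ).neg.neg) <| Derives.intro <|
      Derives.mp (Derives.hyp χ.neg) (Derives.mp (Derives.hyp (γ.imp χ)) (Derives.hyp γ))

theorem cases_neg_neg (α χ : PropForm) :
    IPC ((α.imp χ.neg.neg).imp ((α.neg.imp χ.neg.neg).imp χ.neg.neg)) :=
  show Derives [χ.neg, α.neg.imp χ.neg.neg, α.imp χ.neg.neg] .fls from
    have hnα : Derives [χ.neg, α.neg.imp χ.neg.neg, α.imp χ.neg.neg] α.neg :=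
      Derives.intro <|
        Derives.mp (Derives.mp (Derives.hyp (α.imp χ.neg.neg)) (Derives.hyp α))
          (Derives.hyp χ.neg)
    Derives.mp (Derives.mp (Derives.hyp (α.neg.imp χ.neg.neg)) hnα) (Derives.hyp χ.neg)

theorem conjList_imp_of_mem {L : List PropForm} {γ : PropForm} (h : γ ∈ L) :
    IPC ((conjList L).imp γ) := by
  induction L with
  | nil => cases h
  | cons x L ih =>
    rcases List.mem_cons.mp h with rfl | h
    · exact axAndL γ (conjList L)
    · exact show Derives [conjList (x :: L)] γ from
        Derives.mp (Derives.of_IPC _ (ih h))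
          (Derives.mp (Derives.of_IPC _ (axAndR x (conjList L)))
            (Derives.hyp _ (List.mem_singleton_self _)))

namespace Derives

variable {Γ : List PropForm}

theorem neg_neg_of_IPC_neg_neg_impChain {χ : PropForm} (h : IPC (impChain Γ χ).neg.neg) :
    Derives Γ χ.neg.neg := by
  induction Γ generalizing χ with
  | nil => exact h
  | cons γ Γ ih =>
    exact show Derives Γ (γ.imp χ.neg.neg) from
      mp (of_IPC Γ (neg_neg_imp_imp_neg_neg γ χ)) (ih h)

theorem kalmar (v : ℕ → Bool) (χ : PropForm) (hΓ : ∀ a ∈ χ.vars, litOf v a ∈ Γ) :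
    Derives Γ (if χ.eval v then χ else χ.neg) := by
  induction χ with
  | tr => exact of_IPC Γ axTr
  | fls => exact of_IPC Γ (imp_self .fls)
  | var a =>
    have hm := hΓ a (by simp [vars])
    cases h : v a <;> simpa [eval, litOf, h] using hyp _ hm
  | and φ ψ ihφ ihψ =>
    have hφ := ihφ fun a ha => hΓ a (by simp [vars, ha])
    have hψ := ihψ fun a ha => hΓ a (by simp [vars, ha])
    cases h₁ : φ.eval v <;> cases h₂ : ψ.eval v <;>
      simp only [h₁, h₂, eval, if_true, if_false, Bool.false_eq_true, Bool.and_self,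
        Bool.and_false, Bool.and_true] at hφ hψ ⊢
    · exact neg_and_of_neg_left hφ
    · exact neg_and_of_neg_left hφ
    · exact neg_and_of_neg_right hψ
    · exact and_intro hφ hψ
  | or φ ψ ihφ ihψ =>
    have hφ := ihφ fun a ha => hΓ a (by simp [vars, ha])
    have hψ := ihψ fun a ha => hΓ a (by simp [vars, ha])
    cases h₁ : φ.eval v <;> cases h₂ : ψ.eval v <;>
      simp only [h₁, h₂, eval, if_true, if_false, Bool.false_eq_true, Bool.or_self,
        Bool.or_false, Bool.or_true] at hφ hψ ⊢
    · exact neg_or hφ hψ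
    · exact or_inr hψ
    · exact or_inl hφ
    · exact or_inl hφ
  | imp φ ψ ihφ ihψ =>
    have hφ := ihφ fun a ha => hΓ a (by simp [vars, ha])
    have hψ := ihψ fun a ha => hΓ a (by simp [vars, ha])
    cases h₁ : φ.eval v <;> cases h₂ : ψ.eval v <;>
      simp only [h₁, h₂, eval, if_true, if_false, Bool.false_eq_true, Bool.not_true,
        Bool.not_false, Bool.or_self, Bool.or_false, Bool.or_true] at hφ hψ ⊢
    · exact imp_of_neg hφ
    · exact imp_of_neg hφ
    · exact neg_imp hφ hψ
    · exact imp_of_right hψ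

theorem of_forall_litOf {T : PropForm} (l : List ℕ) (hl : l.Nodup)
    (split : ∀ a ∈ l, Derives Γ (((var a).imp T).imp (((var a).neg.imp T).imp T)))
    (h : ∀ v : ℕ → Bool, Derives (l.map (litOf v) ++ Γ) T) : Derives Γ T := by
  induction l with
  | nil => simpa using h fun _ => true
  | cons a l ih =>
    obtain ⟨hal, hl⟩ := List.nodup_cons.mp hl
    refine ih hl (fun b hb => split b (List.mem_cons_of_mem _ hb)) fun v => ?_
    have hmap (b : Bool) : l.map (litOf (Function.update v a b)) = l.map (litOf v) :=
      List.map_congr_left fun x hx => by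
        simp [litOf, Function.update_of_ne (ne_of_mem_of_not_mem hx hal)]
    have hpos : Derives (var a :: (l.map (litOf v) ++ Γ)) T := by
      simpa [litOf, hmap] using h (Function.update v a true)
    have hneg : Derives ((var a).neg :: (l.map (litOf v) ++ Γ)) T := by
      simpa [litOf, hmap] using h (Function.update v a false)
    exact mp (mp ((split a List.mem_cons_self).mono (List.subset_append_right _ _)) hpos.intro)
      hneg.intro

end Derives

open Derives

theorem neg_neg_of_taut {χ : PropForm} (h : χ.Taut) : IPC χ.neg.neg := by
  refine of_forall_litOf (Γ := []) χ.vars.toList χ.vars.nodup_toList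
    (fun a _ => of_IPC _ (cases_neg_neg _ _)) fun v => ?_
  have hχ := kalmar (Γ := χ.vars.toList.map (litOf v) ++ []) v χ fun a ha =>
    List.mem_append_left _ (List.mem_map_of_mem (Finset.mem_toList.2 ha))
  rw [h v, if_pos rfl] at hχ
  exact intro (Derives.mp (hyp χ.neg) (weaken _ hχ))

theorem Derives.neg_neg_of_entails {Γ : List PropForm} {χ : PropForm}
    (h : ∀ v, (∀ γ ∈ Γ, γ.eval v = true) → χ.eval v = true) : Derives Γ χ.neg.neg :=
  neg_neg_of_IPC_neg_neg_impChain (neg_neg_of_taut fun v => (eval_impChain Γ χ v).2 (h v))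

theorem Derives.neg_or_neg_neg_of_taut_imp {m : ℕ} {φ ψ : PropForm}
    (hshared : φ.vars ∩ ψ.vars ⊆ Finset.range m) (htaut : (φ.imp ψ).Taut) (v : ℕ → Bool) :
    Derives ((List.range m).map (litOf v)) (φ.neg.or ψ.neg.neg) := by
  have hagree (w : ℕ → Bool) (hw : ∀ γ ∈ (List.range m).map (litOf v), γ.eval w = true) :
      ∀ a < m, w a = v a := by
    simpa using (forall_eval_litOf v w _).1 hw
  by_cases hsat : ∃ u, (∀ a < m, u a = v a) ∧ φ.eval u = true
  · obtain ⟨u, hu, hφu⟩ := hsat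
    refine or_inr (neg_neg_of_entails fun w hw => htaut.eval_right hφu fun a ha => ?_)
    have ham : a < m := Finset.mem_range.mp (hshared ha)
    rw [hagree w hw a ham, hu a ham]
  · refine or_inl <| Derives.mp (of_IPC _ (neg_neg_neg_imp_neg φ)) <|
      neg_neg_of_entails fun w hw => ?_
    simpa [neg, eval] using fun hφw => hsat ⟨w, hagree w hw, hφw⟩

end IPC

/-- If `CPC ⊢ φ(p,r) → ψ(p,s)` (shared variables among
`p₀,…,p_{m-1}`), then `IPC ⊢ ⋀ᵢ(pᵢ ∨ ¬pᵢ) → (¬φ ∨ ¬¬ψ)`. -/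
theorem CPC_to_IPC_translation (m : ℕ) (φ ψ : PropForm)
    (hshared : φ.vars ∩ ψ.vars ⊆ Finset.range m)
    (htaut : (φ.imp ψ).Taut) :
    IPC ((excludedMiddleConj m).imp (φ.neg.or ψ.neg.neg)) := by
  let em := (List.range m).map fun i => (PropForm.var i).or (PropForm.var i).neg
  have hcases : IPC.Derives em (φ.neg.or ψ.neg.neg) :=
    IPC.Derives.of_forall_litOf (List.range m) List.nodup_range
      (fun a ha => IPC.Derives.cases_of_or_neg_mem (List.mem_map_of_mem ha))
      fun v => (IPC.Derives.neg_or_neg_neg_of_taut_imp hshared htaut v).mono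
        (List.subset_append_left _ _)
  exact hcases.cut fun γ hγ => show IPC.Derives [_] γ from IPC.conjList_imp_of_mem hγ
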